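/- Let a, b be real numbers with a > -1, -1 < b < 0 and |b| < 1 + a, and let γ satisfy max(-b, 1+b) < γ < 1. Then there exists a constant C > 0, depending only on a, b, γ, such that for all s > r > 0 and all ε > 0: 0 ≤ R_{a,b}(r, s) - R_{a,b}(r, s+ε) ≤ C · (s-r)^b · s^{1+a-γ} · ε^γ. (The middle quantity equals E[B^{a,b}_r (B^{a,b}_s - B^{a,b}_{s+ε})], and it equals (1/(2Β(a+1,b+1))) ∫_0^r u^a ((s-u)^b - (s+ε-u)^b) du.) -/
import Mathlib


open Real MeasureTheory

/-- The Euler Beta function. -/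
noncomputable def Beta (x y : ℝ) : ℝ := Real.Gamma x * Real.Gamma y / Real.Gamma (x + y)

/-- The covariance function `R_{a,b}(t,s)` of the weighted fractional Brownian motion. -/
noncomputable def R (a b t s : ℝ) : ℝ :=
  (1 / (2 * Beta (a + 1) (b + 1))) *
    ∫ u in (0:ℝ)..(min t s), u ^ a * ((t - u) ^ b + (s - u) ^ b)

/-- Integrability of `u^p (t-u)^q` on `[0,r]` for `r ≤ t`. -/
lemma integA {p q t r : ℝ} (hp : -1 < p) (hq : -1 < q) (hr : 0 < r) (hrt : r ≤ t) :
    IntervalIntegrable (fun u : ℝ => u ^ p * (t - u) ^ q) volume 0 r := by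
  have h2 : (0:ℝ) < r / 2 := by linarith
  apply IntervalIntegrable.trans (b := r / 2)
  · apply IntervalIntegrable.mul_continuousOn (intervalIntegral.intervalIntegrable_rpow' hp)
    apply ContinuousOn.rpow_const (continuousOn_const.sub continuousOn_id)
    intro x hx
    rw [Set.uIcc_of_le (by linarith : (0:ℝ) ≤ r / 2)] at hx
    left
    have : x ≤ r / 2 := hx.2
    have : 0 < t - x := by linarith
    exact ne_of_gt this
  · apply IntervalIntegrable.continuousOn_mul
    · have h := (intervalIntegral.intervalIntegrable_rpow' (r := q) (a := t - r / 2)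
        (b := t - r) hq).comp_sub_left t
      have e1 : t - (t - r / 2) = r / 2 := by ring
      have e2 : t - (t - r) = r := by ring
      rwa [e1, e2] at h
    · apply ContinuousOn.rpow_const continuousOn_id
      intro x hx
      rw [Set.uIcc_of_le (by linarith : r / 2 ≤ r)] at hx
      exact Or.inl (ne_of_gt (lt_of_lt_of_le h2 hx.1))

/-- `(s/2)^c = 2^(-c) * s^c`. -/
lemma half_rpow {s : ℝ} (hs : 0 < s) (c : ℝ) : (s / 2) ^ c = (2:ℝ) ^ (-c) * s ^ c := by
  rw [show s / 2 = 2⁻¹ * s by ring, Real.mul_rpow (by norm_num) hs.le,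
    Real.inv_rpow (by norm_num), ← Real.rpow_neg (by norm_num)]

/-- Key pointwise bound: `x^b - (x+ε)^b ≤ ε^γ x^(b-γ)`. -/
lemma pointwise_bound {b γ x ε : ℝ} (hb0 : -1 < b) (hb1 : b < 0) (hγ0 : 0 < γ) (hγ2 : γ < 1)
    (hx : 0 < x) (hε : 0 < ε) : x ^ b - (x + ε) ^ b ≤ ε ^ γ * x ^ (b - γ) := by
  have hxε : (0:ℝ) < x + ε := by linarith
  have hxbγ : (0:ℝ) ≤ x ^ (b - γ) := Real.rpow_nonneg hx.le _
  rcases le_or_gt x ε with h | h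
  · have h3 : x ^ b = x ^ γ * x ^ (b - γ) := by
      rw [← Real.rpow_add hx]; congr 1; ring
    have h4 : x ^ γ ≤ ε ^ γ := Real.rpow_le_rpow hx.le h hγ0.le
    calc x ^ b - (x + ε) ^ b ≤ x ^ b := by linarith [Real.rpow_pos_of_pos hxε b]
      _ = x ^ γ * x ^ (b - γ) := h3
      _ ≤ ε ^ γ * x ^ (b - γ) := mul_le_mul_of_nonneg_right h4 hxbγ
  · -- ε < x
    have h0uIcc : (0:ℝ) ∉ Set.uIcc x (x + ε) := by
      rw [Set.uIcc_of_le (by linarith)]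
      intro hmem
      exact absurd hmem.1 (by linarith)
    have hI : (∫ t in x..(x + ε), t ^ (b - 1)) =
        ((x + ε) ^ (b - 1 + 1) - x ^ (b - 1 + 1)) / (b - 1 + 1) :=
      integral_rpow (Or.inr ⟨by intro hc; apply hb1.ne; linarith [sub_eq_iff_eq_add.mp hc],
        h0uIcc⟩)
    have hmono : (∫ t in x..(x + ε), t ^ (b - 1)) ≤ ∫ _t in x..(x + ε), x ^ (b - 1) := by
      apply intervalIntegral.integral_mono_on (by linarith)
      · exact intervalIntegral.intervalIntegrable_rpow (Or.inr h0uIcc)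
      · exact intervalIntegrable_const
      · intro t ht
        exact Real.rpow_le_rpow_of_nonpos hx ht.1 (by linarith)
    have hconst : (∫ _t in x..(x + ε), x ^ (b - 1)) = ε * x ^ (b - 1) := by
      rw [intervalIntegral.integral_const, smul_eq_mul]; ring_nf
    have hkey : x ^ b - (x + ε) ^ b ≤ (-b) * (ε * x ^ (b - 1)) := by
      have e : b - 1 + 1 = b := by ring
      rw [e] at hI
      have hb' : (0:ℝ) < -b := by linarith
      have := mul_le_mul_of_nonneg_left (hmono.trans_eq hconst) hb'.le
      rw [hI] at this
      have hbne : b ≠ 0 := ne_of_lt hb1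
      calc x ^ b - (x + ε) ^ b = -b * (((x + ε) ^ b - x ^ b) / b) := by
            field_simp
            ring
        _ ≤ -b * (ε * x ^ (b - 1)) := this
    have hεx : ε * x ^ (b - 1) ≤ ε ^ γ * x ^ (b - γ) := by
      have e1 : ε = ε ^ γ * ε ^ (1 - γ) := by
        rw [← Real.rpow_add hε]; norm_num
      have e2 : x ^ (b - γ) = x ^ (1 - γ) * x ^ (b - 1) := by
        rw [← Real.rpow_add hx]; congr 1; ring
      have h4 : ε ^ (1 - γ) ≤ x ^ (1 - γ) := Real.rpow_le_rpow hε.le h.le (by linarith)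
      have h5 : (0:ℝ) ≤ x ^ (b - 1) := Real.rpow_nonneg hx.le _
      have h6 : (0:ℝ) ≤ ε ^ γ := Real.rpow_nonneg hε.le _
      calc ε * x ^ (b - 1) = ε ^ γ * ε ^ (1 - γ) * x ^ (b - 1) := by rw [← e1]
        _ ≤ ε ^ γ * x ^ (1 - γ) * x ^ (b - 1) := by
            apply mul_le_mul_of_nonneg_right _ h5
            exact mul_le_mul_of_nonneg_left h4 h6
        _ = ε ^ γ * x ^ (b - γ) := by rw [e2]; ring
    have hεx' : (0:ℝ) ≤ ε * x ^ (b - 1) :=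
      mul_nonneg hε.le (Real.rpow_nonneg hx.le _)
    calc x ^ b - (x + ε) ^ b ≤ (-b) * (ε * x ^ (b - 1)) := hkey
      _ ≤ 1 * (ε * x ^ (b - 1)) := mul_le_mul_of_nonneg_right (by linarith) hεx'
      _ = ε * x ^ (b - 1) := one_mul _
      _ ≤ ε ^ γ * x ^ (b - γ) := hεx

set_option maxHeartbeats 1000000 in
theorem stmt_19 (a b γ : ℝ) (ha : -1 < a) (hb0 : -1 < b) (hb1 : b < 0) (hb2 : |b| < 1 + a)
    (hγ1 : max (-b) (1 + b) < γ) (hγ2 : γ < 1) :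
    ∃ C > (0:ℝ), ∀ s r ε : ℝ, 0 < r → r < s → 0 < ε →
      0 ≤ R a b r s - R a b r (s + ε) ∧
        R a b r s - R a b r (s + ε) ≤ C * (s - r) ^ b * s ^ (1 + a - γ) * ε ^ γ := by
  have hγ0 : 0 < γ := by linarith [le_max_left (-b) (1 + b)]
  have hγ' : -1 < -γ := by linarith
  have ha1 : (0:ℝ) < a + 1 := by linarith
  have h1γ : (0:ℝ) < 1 - γ := by linarith
  have hBeta : 0 < Beta (a + 1) (b + 1) := by
    apply div_pos (mul_pos (Real.Gamma_pos_of_pos (by linarith))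
      (Real.Gamma_pos_of_pos (by linarith)))
    exact Real.Gamma_pos_of_pos (by linarith)
  set c : ℝ := 1 / (2 * Beta (a + 1) (b + 1)) with hc
  have hcpos : 0 < c := by positivity
  set K : ℝ := 2 / (a + 1) + (2:ℝ) ^ |a| / (1 - γ) with hK
  have h2a : (0:ℝ) < (2:ℝ) ^ |a| := Real.rpow_pos_of_pos two_pos _
  have hKpos : 0 < K := by positivity
  refine ⟨c * K, by positivity, fun s r ε hr hrs hε => ?_⟩
  have hs : 0 < s := hr.trans hrs
  have hhalf : 0 < s / 2 := by linarith
  -- integrability facts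
  have I_rr : IntervalIntegrable (fun u : ℝ => u ^ a * (r - u) ^ b) volume 0 r :=
    integA ha hb0 hr le_rfl
  have I_rs : IntervalIntegrable (fun u : ℝ => u ^ a * (s - u) ^ b) volume 0 r :=
    integA ha hb0 hr hrs.le
  have I_rse : IntervalIntegrable (fun u : ℝ => u ^ a * (s + ε - u) ^ b) volume 0 r :=
    integA ha hb0 hr (by linarith)
  have I_h : IntervalIntegrable (fun u : ℝ => u ^ a * (s - u) ^ (-γ)) volume 0 r :=
    integA ha hγ' hr hrs.le
  -- the identity
  have hEq : R a b r s - R a b r (s + ε)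
      = c * ∫ u in (0:ℝ)..r, (u ^ a * (s - u) ^ b - u ^ a * (s + ε - u) ^ b) := by
    have e1 : (∫ u in (0:ℝ)..r, u ^ a * ((r - u) ^ b + (s - u) ^ b))
        = (∫ u in (0:ℝ)..r, u ^ a * (r - u) ^ b) + ∫ u in (0:ℝ)..r, u ^ a * (s - u) ^ b := by
      simp only [mul_add]
      exact intervalIntegral.integral_add I_rr I_rs
    have e2 : (∫ u in (0:ℝ)..r, u ^ a * ((r - u) ^ b + (s + ε - u) ^ b))
        = (∫ u in (0:ℝ)..r, u ^ a * (r - u) ^ b) + ∫ u in (0:ℝ)..r, u ^ a * (s + ε - u) ^ b := by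
      simp only [mul_add]
      exact intervalIntegral.integral_add I_rr I_rse
    have e3 : (∫ u in (0:ℝ)..r, (u ^ a * (s - u) ^ b - u ^ a * (s + ε - u) ^ b))
        = (∫ u in (0:ℝ)..r, u ^ a * (s - u) ^ b) - ∫ u in (0:ℝ)..r, u ^ a * (s + ε - u) ^ b :=
      intervalIntegral.integral_sub I_rs I_rse
    rw [R, R, min_eq_left hrs.le, min_eq_left (by linarith : r ≤ s + ε), e1, e2, e3, ← hc]
    ring
  -- nonnegativity
  have hJ0 : 0 ≤ ∫ u in (0:ℝ)..r, (u ^ a * (s - u) ^ b - u ^ a * (s + ε - u) ^ b) := by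
    apply intervalIntegral.integral_nonneg hr.le
    intro u hu
    have h1 : (s + ε - u) ^ b ≤ (s - u) ^ b :=
      Real.rpow_le_rpow_of_nonpos (by linarith [hu.2]) (by linarith) hb1.le
    have h2 : (0:ℝ) ≤ u ^ a := Real.rpow_nonneg hu.1 a
    nlinarith [mul_le_mul_of_nonneg_left h1 h2]
  constructor
  · rw [hEq]; exact mul_nonneg hcpos.le hJ0
  -- upper bound
  have hsr : (0:ℝ) < s - r := by linarith
  have hεγ : (0:ℝ) ≤ ε ^ γ := Real.rpow_nonneg hε.le _
  have hsrb : (0:ℝ) ≤ (s - r) ^ b := Real.rpow_nonneg hsr.le _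
  -- pointwise comparison of integrands
  have hJle : (∫ u in (0:ℝ)..r, (u ^ a * (s - u) ^ b - u ^ a * (s + ε - u) ^ b))
      ≤ ε ^ γ * (s - r) ^ b * ∫ u in (0:ℝ)..r, u ^ a * (s - u) ^ (-γ) := by
    rw [← intervalIntegral.integral_const_mul]
    apply intervalIntegral.integral_mono_on hr.le (I_rs.sub I_rse) (I_h.const_mul _)
    intro u hu
    have hsu : 0 < s - u := by linarith [hu.2]
    have hua : (0:ℝ) ≤ u ^ a := Real.rpow_nonneg hu.1 a
    have e : s + ε - u = (s - u) + ε := by ring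
    rw [e]
    have hp := pointwise_bound hb0 hb1 hγ0 hγ2 hsu hε
    have e2 : (s - u) ^ (b - γ) = (s - u) ^ b * (s - u) ^ (-γ) := by
      rw [← Real.rpow_add hsu]; congr 1 <;> ring
    have hsb : (s - u) ^ b ≤ (s - r) ^ b :=
      Real.rpow_le_rpow_of_nonpos hsr (by linarith [hu.2]) hb1.le
    have hsγ : (0:ℝ) ≤ (s - u) ^ (-γ) := Real.rpow_nonneg hsu.le _
    have step1 := mul_le_mul_of_nonneg_left hp hua
    rw [e2] at step1
    have step2 := mul_le_mul_of_nonneg_right hsb (mul_nonneg (mul_nonneg hεγ hua) hsγ)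
    nlinarith [step1, step2]
  -- bound the remaining integral
  have claim1 : ∀ m : ℝ, 0 < m → m ≤ s / 2 →
      (∫ u in (0:ℝ)..m, u ^ a * (s - u) ^ (-γ)) ≤ (s / 2) ^ (-γ) * (m ^ (a + 1) / (a + 1)) := by
    intro m hm hms
    have hmono : (∫ u in (0:ℝ)..m, u ^ a * (s - u) ^ (-γ))
        ≤ ∫ u in (0:ℝ)..m, u ^ a * (s / 2) ^ (-γ) := by
      apply intervalIntegral.integral_mono_on hm.le (integA ha hγ' hm (by linarith))
        ((intervalIntegral.intervalIntegrable_rpow' ha).mul_const _)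
      intro u hu
      apply mul_le_mul_of_nonneg_left _ (Real.rpow_nonneg hu.1 a)
      exact Real.rpow_le_rpow_of_nonpos hhalf (by linarith [hu.2]) (by linarith)
    have hval : (∫ u in (0:ℝ)..m, u ^ a * (s / 2) ^ (-γ))
        = (s / 2) ^ (-γ) * (m ^ (a + 1) / (a + 1)) := by
      rw [intervalIntegral.integral_mul_const, integral_rpow (Or.inl ha),
        Real.zero_rpow (by linarith : a + 1 ≠ 0)]
      ring
    linarith [hmono, hval.le]
  have hhalfγ : (s / 2) ^ (-γ) = (2:ℝ) ^ γ * s ^ (-γ) := by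
    rw [half_rpow hs, neg_neg]
  have h2γ : (2:ℝ) ^ γ ≤ 2 := by
    calc (2:ℝ) ^ γ ≤ (2:ℝ) ^ (1:ℝ) :=
      Real.rpow_le_rpow_of_exponent_le one_le_two hγ2.le
      _ = 2 := Real.rpow_one 2
  have hsγpos : (0:ℝ) < s ^ (-γ) := Real.rpow_pos_of_pos hs _
  have hmerge : s ^ (-γ) * s ^ (a + 1) = s ^ (1 + a - γ) := by
    rw [← Real.rpow_add hs]; congr 1; ring
  have hsa1pos : (0:ℝ) < s ^ (a + 1) := Real.rpow_pos_of_pos hs _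
  have hIbound : (∫ u in (0:ℝ)..r, u ^ a * (s - u) ^ (-γ)) ≤ K * s ^ (1 + a - γ) := by
    have hspow : (0:ℝ) < s ^ (1 + a - γ) := Real.rpow_pos_of_pos hs _
    have term1 : ∀ m : ℝ, 0 < m → m ≤ s / 2 →
        (∫ u in (0:ℝ)..m, u ^ a * (s - u) ^ (-γ)) ≤ (2 / (a + 1)) * s ^ (1 + a - γ) := by
      intro m hm hms
      have h1 := claim1 m hm hms
      have hms' : m ^ (a + 1) ≤ s ^ (a + 1) :=
        Real.rpow_le_rpow hm.le (by linarith) (by linarith)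
      calc (∫ u in (0:ℝ)..m, u ^ a * (s - u) ^ (-γ))
          ≤ (s / 2) ^ (-γ) * (m ^ (a + 1) / (a + 1)) := h1
        _ = (2:ℝ) ^ γ * s ^ (-γ) * (m ^ (a + 1) / (a + 1)) := by rw [hhalfγ]
        _ ≤ 2 * s ^ (-γ) * (s ^ (a + 1) / (a + 1)) := by
            apply mul_le_mul (mul_le_mul_of_nonneg_right h2γ hsγpos.le)
              (div_le_div₀ (Real.rpow_nonneg hs.le _) hms' ha1 le_rfl)
              (by positivity) (by positivity)
        _ = (2 / (a + 1)) * (s ^ (-γ) * s ^ (a + 1)) := by ring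
        _ = (2 / (a + 1)) * s ^ (1 + a - γ) := by rw [hmerge]
    rcases le_or_gt r (s / 2) with hcase | hcase
    · refine (term1 r hr hcase).trans ?_
      nlinarith [mul_pos (div_pos h2a h1γ) hspow]
    · -- split at s/2
      have int1 : IntervalIntegrable (fun u : ℝ => u ^ a * (s - u) ^ (-γ)) volume 0 (s / 2) :=
        integA ha hγ' hhalf (by linarith)
      have int2 : IntervalIntegrable (fun u : ℝ => u ^ a * (s - u) ^ (-γ)) volume (s / 2) r := by
        apply I_h.mono_set
        rw [Set.uIcc_of_le hr.le, Set.uIcc_of_le hcase.le]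
        exact Set.Icc_subset_Icc (by linarith) le_rfl
      have hsplit : (∫ u in (0:ℝ)..r, u ^ a * (s - u) ^ (-γ))
          = (∫ u in (0:ℝ)..(s / 2), u ^ a * (s - u) ^ (-γ))
            + ∫ u in (s / 2)..r, u ^ a * (s - u) ^ (-γ) :=
        (intervalIntegral.integral_add_adjacent_intervals int1 int2).symm
      have hsapos : (0:ℝ) ≤ s ^ a := (Real.rpow_pos_of_pos hs a).le
      have hub : ∀ u ∈ Set.Icc (s / 2) r, u ^ a ≤ (2:ℝ) ^ |a| * s ^ a := by
        intro u hu
        have hu2 : u ≤ s := by linarith [hu.2]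
        rcases le_or_gt 0 a with ha' | ha'
        · have h1 : u ^ a ≤ s ^ a := Real.rpow_le_rpow (by linarith [hu.1]) hu2 ha'
          have h2 : (1:ℝ) ≤ (2:ℝ) ^ |a| :=
            Real.one_le_rpow one_le_two (abs_nonneg a)
          calc u ^ a ≤ s ^ a := h1
            _ = 1 * s ^ a := (one_mul _).symm
            _ ≤ (2:ℝ) ^ |a| * s ^ a := mul_le_mul_of_nonneg_right h2 hsapos
        · have h1 : u ^ a ≤ (s / 2) ^ a := Real.rpow_le_rpow_of_nonpos hhalf hu.1 ha'.le
          have h2 : (s / 2) ^ a = (2:ℝ) ^ (-a) * s ^ a := half_rpow hs a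
          rw [abs_of_neg ha']
          linarith [h1, h2.le]
      have intg : IntervalIntegrable (fun u : ℝ => (s - u) ^ (-γ)) volume (s / 2) r := by
        have h := (intervalIntegral.intervalIntegrable_rpow' (r := -γ) (a := s - s / 2)
          (b := s - r) hγ').comp_sub_left s
        have e1 : s - (s - s / 2) = s / 2 := by ring
        have e2 : s - (s - r) = r := by ring
        rwa [e1, e2] at h
      have hmono2 : (∫ u in (s / 2)..r, u ^ a * (s - u) ^ (-γ))
          ≤ ∫ u in (s / 2)..r, ((2:ℝ) ^ |a| * s ^ a) * (s - u) ^ (-γ) := by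
        apply intervalIntegral.integral_mono_on hcase.le int2 (intg.const_mul _)
        intro u hu
        exact mul_le_mul_of_nonneg_right (hub u hu)
          (Real.rpow_nonneg (by linarith [hu.2] : (0:ℝ) ≤ s - u) _)
      have hval2 : (∫ u in (s / 2)..r, ((2:ℝ) ^ |a| * s ^ a) * (s - u) ^ (-γ))
          = (2:ℝ) ^ |a| * s ^ a * ∫ u in (s / 2)..r, (s - u) ^ (-γ) :=
        intervalIntegral.integral_const_mul _ _
      have hcomp : (∫ u in (s / 2)..r, (s - u) ^ (-γ))
          = ∫ v in (s - r)..(s - s / 2), v ^ (-γ) :=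
        intervalIntegral.integral_comp_sub_left (fun v => v ^ (-γ)) s
      have hval3 : (∫ v in (s - r)..(s - s / 2), v ^ (-γ))
          = ((s - s / 2) ^ (-γ + 1) - (s - r) ^ (-γ + 1)) / (-γ + 1) :=
        integral_rpow (Or.inl hγ')
      have hsm : s - s / 2 = s / 2 := by ring
      have h4 : (0:ℝ) ≤ (s - r) ^ (-γ + 1) := Real.rpow_nonneg hsr.le _
      have h5 : (s / 2) ^ (-γ + 1) ≤ s ^ (-γ + 1) :=
        Real.rpow_le_rpow (by positivity) (by linarith) (by linarith)
      have h6 : (∫ u in (s / 2)..r, (s - u) ^ (-γ)) ≤ s ^ (-γ + 1) / (1 - γ) := by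
        rw [hcomp, hval3, hsm, show -γ + 1 = 1 - γ by ring]
        rw [show -γ + 1 = 1 - γ by ring] at h4 h5
        exact div_le_div₀ (Real.rpow_nonneg hs.le _) (by linarith) h1γ le_rfl
      have merge2 : s ^ a * s ^ (-γ + 1) = s ^ (1 + a - γ) := by
        rw [← Real.rpow_add hs]; congr 1; ring
      have hT2 : (∫ u in (s / 2)..r, u ^ a * (s - u) ^ (-γ))
          ≤ ((2:ℝ) ^ |a| / (1 - γ)) * s ^ (1 + a - γ) := by
        calc (∫ u in (s / 2)..r, u ^ a * (s - u) ^ (-γ))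
            ≤ (2:ℝ) ^ |a| * s ^ a * ∫ u in (s / 2)..r, (s - u) ^ (-γ) :=
              hmono2.trans hval2.le
          _ ≤ (2:ℝ) ^ |a| * s ^ a * (s ^ (-γ + 1) / (1 - γ)) :=
              mul_le_mul_of_nonneg_left h6 (by positivity)
          _ = ((2:ℝ) ^ |a| / (1 - γ)) * (s ^ a * s ^ (-γ + 1)) := by ring
          _ = ((2:ℝ) ^ |a| / (1 - γ)) * s ^ (1 + a - γ) := by rw [merge2]
      have hT1 := term1 (s / 2) hhalf le_rfl
      rw [hsplit, hK]
      nlinarith [hT1, hT2]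
  calc R a b r s - R a b r (s + ε)
      = c * ∫ u in (0:ℝ)..r, (u ^ a * (s - u) ^ b - u ^ a * (s + ε - u) ^ b) := hEq
    _ ≤ c * (ε ^ γ * (s - r) ^ b * (K * s ^ (1 + a - γ))) := by
        apply mul_le_mul_of_nonneg_left _ hcpos.le
        exact hJle.trans (mul_le_mul_of_nonneg_left hIbound (mul_nonneg hεγ hsrb))
    _ = c * K * (s - r) ^ b * s ^ (1 + a - γ) * ε ^ γ := by ring
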